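/- For every r > 0, the triangular-distribution value (1/r²)(√π·r·erf(r) + e^{-r²} - 1) is strictly greater than the semicircle-distribution value e^{-r²/2}(I_0(r²/2) + I_1(r²/2)); equivalently, ∫_{-r}^r ρ_T(λ)e^{-λ²} dλ > ∫_{-r}^r ρ_S(λ)e^{-λ²} dλ where ρ_T is the triangular density (r-|λ|)/r² and ρ_S is the semicircle density 2√(r²-λ²)/(π r²). -/

import Mathlib

open scoped Real

/-- The modified Bessel function of the first kind of integer order `γ`. -/
noncomputable def besselI (γ : ℕ) (x : ℝ) : ℝ :=
  (1 / π) * ∫ θ in (0:ℝ)..π, Real.cos (γ * θ) * Real.exp (x * Real.cos θ)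

/-- The error function `erf r = (2/√π) ∫₀^r e^{-t²} dt`. -/
noncomputable def errorFunction (r : ℝ) : ℝ :=
  (2 / Real.sqrt π) * ∫ t in (0:ℝ)..r, Real.exp (-t ^ 2)

open intervalIntegral

lemma norm_tri (r : ℝ) (hr : 0 < r) : (∫ l in (-r)..r, (r - |l|)) = r ^ 2 := by
  have h1 : (∫ l in (-r)..(0:ℝ), (r - |l|)) = ∫ l in (-r)..(0:ℝ), (r + l) := by
    apply integral_congr
    intro l hl
    rw [Set.uIcc_of_le (by linarith)] at hl
    show r - |l| = r + l
    rw [abs_of_nonpos hl.2]; ring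
  have h2 : (∫ l in (0:ℝ)..r, (r - |l|)) = ∫ l in (0:ℝ)..r, (r - l) := by
    apply integral_congr
    intro l hl
    rw [Set.uIcc_of_le (by linarith)] at hl
    show r - |l| = r - l
    rw [abs_of_nonneg hl.1]
  have hint : ∀ a b : ℝ, IntervalIntegrable (fun l : ℝ => r - |l|) MeasureTheory.volume a b :=
    fun a b => (continuous_const.sub continuous_abs).intervalIntegrable a b
  rw [← integral_add_adjacent_intervals (hint (-r) 0) (hint 0 r), h1, h2]
  rw [integral_add (continuous_const.intervalIntegrable _ _) (continuous_id'.intervalIntegrable _ _),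
    integral_sub (continuous_const.intervalIntegrable _ _) (continuous_id'.intervalIntegrable _ _),
    integral_id, integral_id, integral_const, integral_const]
  simp; ring

lemma norm_semi (r : ℝ) (hr : 0 < r) : (∫ l in (-r)..r, Real.sqrt (r^2 - l^2)) = π * r^2 / 2 := by
  have key : (∫ l in (-r)..r, Real.sqrt (r^2 - l^2))
      = ∫ l in (-r)..r, r * Real.sqrt (1 - (l/r)^2) := by
    apply integral_congr
    intro l _
    show Real.sqrt (r^2 - l^2) = r * Real.sqrt (1 - (l/r)^2)
    have h : r^2 - l^2 = r^2 * (1 - (l/r)^2) := by field_simp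
    rw [h, Real.sqrt_mul (sq_nonneg r), Real.sqrt_sq hr.le]
  rw [key, integral_const_mul]
  have := integral_comp_div (a := -r) (b := r) (c := r)
    (f := fun x => Real.sqrt (1 - x^2)) hr.ne'
  rw [this, neg_div, div_self hr.ne', integral_sqrt_one_sub_sq]
  simp [smul_eq_mul]; ring


lemma even_int {f : ℝ → ℝ} (hf : ∀ x, f (-x) = f x) (r : ℝ)
    (hi : IntervalIntegrable f MeasureTheory.volume (-r) 0)
    (hi2 : IntervalIntegrable f MeasureTheory.volume 0 r) :
    (∫ x in (-r)..r, f x) = 2 * ∫ x in (0:ℝ)..r, f x := by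
  rw [← integral_add_adjacent_intervals hi hi2]
  have h := integral_comp_neg (a := (0:ℝ)) (b := r) (f := f)
  simp only [hf, neg_zero] at h
  rw [← h]; ring

lemma int_lin_exp (r : ℝ) : (∫ l in (0:ℝ)..r, l * Real.exp (-l^2)) = (1 - Real.exp (-r^2))/2 := by
  have hd : ∀ x ∈ Set.uIcc (0:ℝ) r,
      HasDerivAt (fun x : ℝ => -Real.exp (-x^2)/2) (x * Real.exp (-x^2)) x := by
    intro x _
    have h : HasDerivAt (fun x : ℝ => -x^2) (-(2*x)) x := by
      simpa using (hasDerivAt_pow 2 x).fun_neg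
    have := h.exp.fun_neg.div_const 2
    exact this.congr_deriv (by ring)
  rw [integral_eq_sub_of_hasDerivAt hd
    ((continuous_id'.mul (by continuity)).intervalIntegrable _ _)]
  simp; ring

lemma tri_eval (r : ℝ) (hr : 0 < r) :
    (∫ l in (-r)..r, ((r - |l|) / r ^ 2) * Real.exp (-l ^ 2)) =
      (1 / r ^ 2) * (Real.sqrt π * r * errorFunction r + Real.exp (-r ^ 2) - 1) := by
  have hc : Continuous (fun l : ℝ => (r - |l|) * Real.exp (-l^2)) := by
    apply Continuous.mul (continuous_const.sub continuous_abs); continuity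
  have step1 : (∫ l in (-r)..r, ((r - |l|) / r ^ 2) * Real.exp (-l ^ 2)) =
      (1/r^2) * ∫ l in (-r)..r, (r - |l|) * Real.exp (-l ^ 2) := by
    rw [← integral_const_mul]
    apply integral_congr; intro l _
    show ((r - |l|) / r ^ 2) * Real.exp (-l ^ 2) = _
    ring
  have step2 : (∫ l in (-r)..r, (r - |l|) * Real.exp (-l ^ 2)) =
      2 * ∫ l in (0:ℝ)..r, (r - |l|) * Real.exp (-l ^ 2) := by
    apply even_int (fun x => by simp) r (hc.intervalIntegrable _ _) (hc.intervalIntegrable _ _)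
  have step3 : (∫ l in (0:ℝ)..r, (r - |l|) * Real.exp (-l ^ 2)) =
      r * (∫ l in (0:ℝ)..r, Real.exp (-l ^ 2)) - (1 - Real.exp (-r^2))/2 := by
    rw [← int_lin_exp r, ← integral_const_mul, ← integral_sub
      ((continuous_const.fun_mul (by continuity)).intervalIntegrable _ _)
      ((continuous_id'.fun_mul (by continuity)).intervalIntegrable _ _)]
    apply integral_congr; intro l hl
    rw [Set.uIcc_of_le hr.le] at hl
    show (r - |l|) * Real.exp (-l ^ 2) = _
    rw [abs_of_nonneg hl.1]; ring
  have herf : Real.sqrt π * r * errorFunction r = 2*r*∫ t in (0:ℝ)..r, Real.exp (-t^2) := by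
    unfold errorFunction
    have h0 : Real.sqrt π ≠ 0 := (Real.sqrt_pos.mpr Real.pi_pos).ne'
    field_simp
  rw [step1, step2, step3, herf]; ring


lemma bessel_sum (x : ℝ) : besselI 0 x + besselI 1 x
    = (1/π) * ∫ θ in (0:ℝ)..π, (1 + Real.cos θ) * Real.exp (x * Real.cos θ) := by
  unfold besselI
  rw [← mul_add, ← integral_add ((by continuity : Continuous fun θ : ℝ =>
      Real.cos ((0:ℕ) * θ) * Real.exp (x * Real.cos θ)).intervalIntegrable _ _)
    ((by continuity : Continuous fun θ : ℝ =>
      Real.cos ((1:ℕ) * θ) * Real.exp (x * Real.cos θ)).intervalIntegrable _ _)]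
  congr 1
  apply integral_congr; intro θ _
  show Real.cos ((0:ℕ) * θ) * Real.exp (x * Real.cos θ)
      + Real.cos ((1:ℕ) * θ) * Real.exp (x * Real.cos θ) = _
  push_cast
  rw [zero_mul, one_mul, Real.cos_zero]
  ring

lemma sub_eval (r : ℝ) (hr : 0 < r) :
    (∫ l in (0:ℝ)..r, Real.sqrt (r^2 - l^2) * Real.exp (-l^2))
      = ∫ θ in (0:ℝ)..π, (r^2/4) * ((1 + Real.cos θ)
          * Real.exp ((r^2/2) * Real.cos θ - r^2/2)) := by
  have hg : Continuous (fun l : ℝ => Real.sqrt (r^2 - l^2) * Real.exp (-l^2)) := by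
    apply Continuous.mul
    · exact Real.continuous_sqrt.comp (by continuity)
    · continuity
  have hder : ∀ θ ∈ Set.uIcc (0:ℝ) π, HasDerivAt (fun θ : ℝ => r * Real.sin (θ/2))
      (r/2 * Real.cos (θ/2)) θ := by
    intro θ _
    have h1 : HasDerivAt (fun θ : ℝ => θ/2) (1/2) θ := (hasDerivAt_id θ).div_const 2
    have h2 := ((Real.hasDerivAt_sin (θ/2)).comp θ h1).const_mul r
    exact h2.congr_deriv (by ring)
  have hsub := integral_comp_smul_deriv hder
    ((by continuity : Continuous fun θ : ℝ => r/2 * Real.cos (θ/2)).continuousOn) hg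
  simp only [zero_div, Real.sin_zero, mul_zero, Real.sin_pi_div_two, mul_one] at hsub
  rw [← hsub]
  apply integral_congr; intro θ hθ
  rw [Set.uIcc_of_le Real.pi_pos.le] at hθ
  have hcos : 0 ≤ Real.cos (θ/2) := Real.cos_nonneg_of_mem_Icc
    ⟨by have := hθ.1; linarith [Real.pi_pos.le], by have := hθ.2; linarith⟩
  show (r/2 * Real.cos (θ/2)) • (Real.sqrt (r^2 - (r * Real.sin (θ/2))^2)
      * Real.exp (-(r * Real.sin (θ/2))^2)) = _
  have hs : Real.sin (θ/2)^2 = 1 - Real.cos (θ/2)^2 := by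
    have := Real.sin_sq_add_cos_sq (θ/2); linarith
  have hcθ : Real.cos θ = 2 * Real.cos (θ/2)^2 - 1 := by
    have := Real.cos_two_mul (θ/2)
    rw [show 2 * (θ/2) = θ by ring] at this
    linarith
  have hsq : r^2 - (r * Real.sin (θ/2))^2 = (r * Real.cos (θ/2))^2 := by
    linear_combination (-(r^2)) * hs
  have hexp : -(r * Real.sin (θ/2))^2 = (r^2/2) * Real.cos θ - r^2/2 := by
    linear_combination (-(r^2)) * hs - (r^2/2) * hcθ
  rw [hsq, Real.sqrt_sq (mul_nonneg hr.le hcos), hexp, smul_eq_mul]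
  show _ = r^2/4 * ((1 + Real.cos θ) * Real.exp (r^2/2 * Real.cos θ - r^2/2))
  rw [show (1 + Real.cos θ) = 2 * Real.cos (θ/2)^2 from by linarith]
  ring

lemma even_int' {f : ℝ → ℝ} (hf : ∀ x, f (-x) = f x) (r : ℝ)
    (hi : IntervalIntegrable f MeasureTheory.volume (-r) 0)
    (hi2 : IntervalIntegrable f MeasureTheory.volume 0 r) :
    (∫ x in (-r)..r, f x) = 2 * ∫ x in (0:ℝ)..r, f x := by
  rw [← integral_add_adjacent_intervals hi hi2]
  have h := integral_comp_neg (a := (0:ℝ)) (b := r) (f := f)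
  simp only [hf, neg_zero] at h
  rw [← h]; ring

lemma semi_eval (r : ℝ) (hr : 0 < r) :
    (∫ l in (-r)..r, (2 * Real.sqrt (r ^ 2 - l ^ 2) / (π * r ^ 2)) * Real.exp (-l ^ 2))
      = Real.exp (-r ^ 2 / 2) * (besselI 0 (r ^ 2 / 2) + besselI 1 (r ^ 2 / 2)) := by
  have hg : Continuous (fun l : ℝ => Real.sqrt (r^2 - l^2) * Real.exp (-l^2)) := by
    apply Continuous.mul
    · exact Real.continuous_sqrt.comp (by continuity)
    · continuity
  have s1 : (∫ l in (-r)..r, (2 * Real.sqrt (r ^ 2 - l ^ 2) / (π * r ^ 2)) * Real.exp (-l ^ 2))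
      = (2/(π*r^2)) * ∫ l in (-r)..r, Real.sqrt (r^2 - l^2) * Real.exp (-l^2) := by
    rw [← integral_const_mul]
    apply integral_congr; intro l _
    show (2 * Real.sqrt (r ^ 2 - l ^ 2) / (π * r ^ 2)) * Real.exp (-l ^ 2) = _
    ring
  have s2 : (∫ l in (-r)..r, Real.sqrt (r^2 - l^2) * Real.exp (-l^2))
      = 2 * ∫ l in (0:ℝ)..r, Real.sqrt (r^2 - l^2) * Real.exp (-l^2) := by
    apply even_int' (fun x => by rw [neg_sq]) r (hg.intervalIntegrable _ _)
      (hg.intervalIntegrable _ _)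
  have s4 : (∫ θ in (0:ℝ)..π, (r^2/4) * ((1 + Real.cos θ)
        * Real.exp ((r^2/2) * Real.cos θ - r^2/2)))
      = (r^2/4 * Real.exp (-(r^2/2))) * ∫ θ in (0:ℝ)..π,
          (1 + Real.cos θ) * Real.exp ((r^2/2) * Real.cos θ) := by
    rw [← integral_const_mul]
    apply integral_congr; intro θ _
    show (r^2/4) * ((1 + Real.cos θ) * Real.exp ((r^2/2) * Real.cos θ - r^2/2)) = _
    rw [show (r^2/2) * Real.cos θ - r^2/2 = (r^2/2) * Real.cos θ + (-(r^2/2)) by ring,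
      Real.exp_add]
    ring
  rw [s1, s2, sub_eval r hr, s4, bessel_sum]
  rw [show -r^2/2 = -(r^2/2) by ring]
  have hπ : (π:ℝ) ≠ 0 := Real.pi_ne_zero
  field_simp
  ring


set_option maxHeartbeats 1000000 in
lemma main_ineq (r : ℝ) (hr : 0 < r) :
    (∫ l in (-r)..r, ((r - |l|) / r ^ 2) * Real.exp (-l ^ 2)) >
      ∫ l in (-r)..r, (2 * Real.sqrt (r ^ 2 - l ^ 2) / (π * r ^ 2)) * Real.exp (-l ^ 2) := by
  have hπ2 : (4:ℝ) < π^2 := by nlinarith [Real.pi_gt_three]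
  have hπ0 : (0:ℝ) < π := Real.pi_pos
  set m : ℝ := (π^2-4)/(π^2+4) with hm
  have hm0 : 0 < m := by apply div_pos <;> nlinarith
  have hm1 : m < 1 := by rw [div_lt_one (by nlinarith)]; nlinarith
  set b : ℝ := r * m with hb
  have hb0 : 0 < b := mul_pos hr hm0
  have hbr : b < r := by
    calc b = r * m := rfl
    _ < r * 1 := by exact mul_lt_mul_of_pos_left hm1 hr
    _ = r := mul_one r
  set c : ℝ := Real.exp (-b^2) with hc
  set d : ℝ → ℝ := fun l => (r - |l|) / r ^ 2 - 2 * Real.sqrt (r ^ 2 - l ^ 2) / (π * r ^ 2)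
    with hd
  set f : ℝ → ℝ := fun l => d l * (Real.exp (-l^2) - c) with hf
  have hmkey : (π^2-4) * r = (π^2+4) * b := by
    rw [hb, hm]; field_simp
  -- continuity
  have hdc : Continuous d := by
    apply Continuous.sub
    · continuity
    · exact ((continuous_const.mul (Real.continuous_sqrt.comp (by continuity))).div_const _)
  have hfc : Continuous f := by
    apply hdc.mul; continuity
  -- sign of d
  have sgn1 : ∀ l : ℝ, |l| < b → 0 < d l := by
    intro l hl
    have habs : 0 ≤ |l| := abs_nonneg l
    have hlr : |l| < r := lt_trans hl hbr
    have hsq : l^2 = |l|^2 := (sq_abs l).symm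
    have key : Real.sqrt (r^2 - l^2) < π * (r - |l|) / 2 := by
      rw [Real.sqrt_lt' (div_pos (mul_pos hπ0 (by linarith)) two_pos)]
      rw [hsq]
      nlinarith [mul_pos (show 0 < r - |l| by linarith)
        (show 0 < (π^2-4)*r - (π^2+4)*|l| by nlinarith)]
    have h1 : 2 * Real.sqrt (r^2 - l^2) < π * (r - |l|) := by linarith
    have : d l = (π * (r - |l|) - 2 * Real.sqrt (r^2 - l^2)) / (π * r^2) := by
      rw [hd]; field_simp
    rw [this]
    apply div_pos (by linarith) (by positivity)
  have sgn2 : ∀ l : ℝ, b ≤ |l| → |l| ≤ r → d l ≤ 0 := by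
    intro l hl hlr
    have habs : 0 ≤ |l| := abs_nonneg l
    have hsq : l^2 = |l|^2 := (sq_abs l).symm
    have key : π * (r - |l|) / 2 ≤ Real.sqrt (r^2 - l^2) := by
      rw [Real.le_sqrt (div_nonneg (mul_nonneg hπ0.le (by linarith)) two_pos.le) (by nlinarith)]
      rw [hsq]
      nlinarith [mul_nonneg (show (0:ℝ) ≤ r - |l| by linarith)
        (show (0:ℝ) ≤ (π^2+4)*|l| - (π^2-4)*r by nlinarith)]
    have h1 : π * (r - |l|) ≤ 2 * Real.sqrt (r^2 - l^2) := by linarith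
    have heq : d l = (π * (r - |l|) - 2 * Real.sqrt (r^2 - l^2)) / (π * r^2) := by
      rw [hd]; field_simp
    rw [heq]
    apply div_nonpos_of_nonpos_of_nonneg (by linarith) (by positivity)
  -- sign of exp factor
  have esgn1 : ∀ l : ℝ, |l| < b → 0 < Real.exp (-l^2) - c := by
    intro l hl
    have : l^2 < b^2 := by
      rw [← sq_abs l]; exact pow_lt_pow_left₀ hl (abs_nonneg l) (by norm_num)
    have := Real.exp_lt_exp.mpr (show -b^2 < -l^2 by linarith)
    rw [hc]; linarith
  have esgn2 : ∀ l : ℝ, b ≤ |l| → Real.exp (-l^2) - c ≤ 0 := by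
    intro l hl
    have : b^2 ≤ l^2 := by
      rw [← sq_abs l]; exact pow_le_pow_left₀ hb0.le hl 2
    have := Real.exp_le_exp.mpr (show -l^2 ≤ -b^2 by linarith)
    rw [hc]; linarith
  -- positivity of ∫ f
  have hpos : 0 < ∫ l in (-r)..r, f l := by
    rw [← integral_add_adjacent_intervals (a := -r) (b := -b) (c := r)
      (hfc.intervalIntegrable _ _) (hfc.intervalIntegrable _ _),
      ← integral_add_adjacent_intervals (a := -b) (b := b) (c := r)
      (hfc.intervalIntegrable _ _) (hfc.intervalIntegrable _ _)]
    have p1 : 0 ≤ ∫ l in (-r)..(-b), f l := by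
      apply integral_nonneg (by linarith)
      intro x hx
      have hax : b ≤ |x| := by rw [abs_of_nonpos (by linarith [hx.2])]; linarith [hx.2]
      have hax2 : |x| ≤ r := by rw [abs_of_nonpos (by linarith [hx.2])]; linarith [hx.1]
      show 0 ≤ d x * (Real.exp (-x^2) - c)
      nlinarith [sgn2 x hax hax2, esgn2 x hax]
    have p2 : 0 < ∫ l in (-b)..b, f l := by
      apply intervalIntegral_pos_of_pos_on (hfc.intervalIntegrable _ _)
      · intro x hx
        have hax : |x| < b := abs_lt.mpr ⟨hx.1, hx.2⟩
        exact mul_pos (sgn1 x hax) (esgn1 x hax)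
      · linarith
    have p3 : 0 ≤ ∫ l in b..r, f l := by
      apply integral_nonneg (by linarith)
      intro x hx
      have hax : b ≤ |x| := by rw [abs_of_nonneg (by linarith [hx.1])]; exact hx.1
      have hax2 : |x| ≤ r := by rw [abs_of_nonneg (by linarith [hx.1])]; exact hx.2
      show 0 ≤ d x * (Real.exp (-x^2) - c)
      nlinarith [sgn2 x hax hax2, esgn2 x hax]
    linarith
  -- ∫ d = 0
  have hd0 : (∫ l in (-r)..r, d l) = 0 := by
    have h1 : (∫ l in (-r)..r, (r - |l|) / r ^ 2) = 1 := by
      rw [show (fun l : ℝ => (r - |l|) / r^2) = (fun l : ℝ => (1/r^2) * (r - |l|)) from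
        funext fun l => by ring, integral_const_mul, norm_tri r hr]
      field_simp
    have h2 : (∫ l in (-r)..r, 2 * Real.sqrt (r ^ 2 - l ^ 2) / (π * r ^ 2)) = 1 := by
      rw [show (fun l : ℝ => 2 * Real.sqrt (r^2 - l^2) / (π * r^2))
          = (fun l : ℝ => (2/(π*r^2)) * Real.sqrt (r^2 - l^2)) from
        funext fun l => by ring, integral_const_mul, norm_semi r hr]
      field_simp
      try ring
    have hsc : Continuous fun l : ℝ => 2 * Real.sqrt (r^2 - l^2)/(π*r^2) :=
      Continuous.div_const (continuous_const.mul (Real.continuous_sqrt.comp (by continuity))) _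
    show (∫ l in (-r)..r,
      ((r - |l|) / r ^ 2 - 2 * Real.sqrt (r ^ 2 - l ^ 2) / (π * r ^ 2))) = 0
    rw [integral_sub ((by continuity : Continuous fun l : ℝ =>
      (r - |l|)/r^2).intervalIntegrable _ _) (hsc.intervalIntegrable _ _), h1, h2]
    ring
  -- ∫ f = T - S
  have hTS : (∫ l in (-r)..r, f l)
      = (∫ l in (-r)..r, ((r - |l|) / r ^ 2) * Real.exp (-l ^ 2))
        - ∫ l in (-r)..r, (2 * Real.sqrt (r ^ 2 - l ^ 2) / (π * r ^ 2)) * Real.exp (-l ^ 2) := by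
    have hg1 : IntervalIntegrable (fun l : ℝ => ((r - |l|) / r ^ 2) * Real.exp (-l ^ 2))
        MeasureTheory.volume (-r) r := (by continuity : Continuous _).intervalIntegrable _ _
    have hg2 : IntervalIntegrable
        (fun l : ℝ => (2 * Real.sqrt (r ^ 2 - l ^ 2) / (π * r ^ 2)) * Real.exp (-l ^ 2))
        MeasureTheory.volume (-r) r :=
      (((continuous_const.mul (Real.continuous_sqrt.comp (by continuity))).div_const
        _).mul (by continuity)).intervalIntegrable _ _
    have hg3 : IntervalIntegrable (fun l : ℝ => c * d l) MeasureTheory.volume (-r) r :=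
      (continuous_const.mul hdc).intervalIntegrable _ _
    have step : (∫ l in (-r)..r, f l)
        = ∫ l in (-r)..r, (((r - |l|) / r ^ 2) * Real.exp (-l ^ 2)
            - (2 * Real.sqrt (r ^ 2 - l ^ 2) / (π * r ^ 2)) * Real.exp (-l ^ 2) - c * d l) := by
      apply integral_congr; intro l _
      show d l * (Real.exp (-l^2) - c) = _
      rw [hd]; ring
    rw [step, integral_sub (hg1.sub hg2) hg3, integral_sub hg1 hg2, integral_const_mul, hd0]
    ring
  linarith [hTS ▸ hpos]


/-- For every `r > 0` the triangular-distribution value exceeds the semicircle one: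
`(1/r²)(√π r erf(r) + e^{-r²} - 1) > e^{-r²/2}(I₀(r²/2) + I₁(r²/2))`; equivalently the
expectation of `e^{-λ²}` under the triangular density `(r-|λ|)/r²` exceeds that under the
semicircle density `2√(r²-λ²)/(π r²)`. -/
theorem triangular_gt_semicircle (r : ℝ) (hr : 0 < r) :
    (1 / r ^ 2) * (Real.sqrt π * r * errorFunction r + Real.exp (-r ^ 2) - 1) >
        Real.exp (-r ^ 2 / 2) * (besselI 0 (r ^ 2 / 2) + besselI 1 (r ^ 2 / 2)) ∧
      (∫ l in (-r)..r, ((r - |l|) / r ^ 2) * Real.exp (-l ^ 2)) >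
        ∫ l in (-r)..r, (2 * Real.sqrt (r ^ 2 - l ^ 2) / (π * r ^ 2)) * Real.exp (-l ^ 2) := by
  refine ⟨?_, main_ineq r hr⟩
  rw [← tri_eval r hr, ← semi_eval r hr]
  exact main_ineq r hr
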